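/- Let k be odd and let G=(V,E) be a k-uniform hyperstar of size d>1 with Laplacian tensor L. If z∈ℝ^n is an H-eigenvector of L corresponding to λ(L), then z_i takes one constant value for all i∈sup(z) with i not the heart; moreover, whenever sup(z) contains a vertex other than the heart, the sign of z at the heart is opposite to the sign of z at the non-heart vertices in sup(z). -/

import Mathlib

/-!
In a `k`-uniform hypergraph with `k ≥ 3` the indicator vector of any vertex is an H-eigenvector of
the Laplacian for the degree of that vertex, so `λ(L) ≥ d > 1` for a hyperstar. A non-heart vertex
`u` lies in exactly one edge `e`, so its eigen-equation reads `(1 - λ) z_u^k = ∏_{j ∈ e} z_j`. As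
`1 - λ ≠ 0` and `k` is odd, `z` is constant on `e` minus the heart, say equal to `c`, and then the
same equation reads `(1 - λ) c^k = z_heart c^(k-1)`, i.e. `z_heart = (1 - λ) c` when `c ≠ 0`.
-/

open Finset

variable {α : Type*} [DecidableEq α]

/-- The degree of a vertex `i`: the number of edges containing `i`. -/
def hdeg (E : Finset (Finset α)) (i : α) : ℕ := (E.filter (fun e => i ∈ e)).card

/-- The action of the Laplacian tensor: `(L x^{k-1})_i`. -/
def lapAct (k : ℕ) (E : Finset (Finset α)) (x : α → ℝ) (i : α) : ℝ :=
  (hdeg E i : ℝ) * x i ^ (k - 1) - ∑ e ∈ E.filter (fun e => i ∈ e), ∏ j ∈ e.erase i, x j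

/-- The action of the signless Laplacian tensor: `(Q x^{k-1})_i`. -/
def signAct (k : ℕ) (E : Finset (Finset α)) (x : α → ℝ) (i : α) : ℝ :=
  (hdeg E i : ℝ) * x i ^ (k - 1) + ∑ e ∈ E.filter (fun e => i ∈ e), ∏ j ∈ e.erase i, x j

/-- The action of the adjacency tensor: `(A x^{k-1})_i`. -/
def adjAct (E : Finset (Finset α)) (x : α → ℝ) (i : α) : ℝ :=
  ∑ e ∈ E.filter (fun e => i ∈ e), ∏ j ∈ e.erase i, x j

/-- `lam` is an H-eigenvalue of the Laplacian tensor. -/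
def IsLapEig (k : ℕ) (E : Finset (Finset α)) (lam : ℝ) : Prop :=
  ∃ x : α → ℝ, x ≠ 0 ∧ ∀ i, lapAct k E x i = lam * x i ^ (k - 1)

/-- `lam` is the largest H-eigenvalue of the Laplacian tensor. -/
def IsLargestLapEig (k : ℕ) (E : Finset (Finset α)) (lam : ℝ) : Prop :=
  IsLapEig k E lam ∧ ∀ mu : ℝ, IsLapEig k E mu → mu ≤ lam

/-- `lam` is an H-eigenvalue of the signless Laplacian tensor. -/
def IsSignEig (k : ℕ) (E : Finset (Finset α)) (lam : ℝ) : Prop :=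
  ∃ x : α → ℝ, x ≠ 0 ∧ ∀ i, signAct k E x i = lam * x i ^ (k - 1)

/-- `lam` is the largest H-eigenvalue of the signless Laplacian tensor. -/
def IsLargestSignEig (k : ℕ) (E : Finset (Finset α)) (lam : ℝ) : Prop :=
  IsSignEig k E lam ∧ ∀ mu : ℝ, IsSignEig k E mu → mu ≤ lam

/-- `lam` is an H-eigenvalue of the adjacency tensor. -/
def IsAdjEig (k : ℕ) (E : Finset (Finset α)) (lam : ℝ) : Prop :=
  ∃ x : α → ℝ, x ≠ 0 ∧ ∀ i, adjAct E x i = lam * x i ^ (k - 1)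

/-- `lam` is the largest H-eigenvalue of the adjacency tensor. -/
def IsLargestAdjEig (k : ℕ) (E : Finset (Finset α)) (lam : ℝ) : Prop :=
  IsAdjEig k E lam ∧ ∀ mu : ℝ, IsAdjEig k E mu → mu ≤ lam

/-- `G = (V, E)` is a `k`-uniform hyperstar of size `d`: there is a heart `h` and a
disjoint partition of the remaining vertices into `d` parts of size `k-1`, the edges
being the heart together with one part. -/
def IsHyperstar (k d : ℕ) (E : Finset (Finset α)) : Prop :=
  ∃ (h : α) (P : Fin d → Finset α),
    (∀ i, h ∉ P i) ∧
    (∀ i, (P i).card = k - 1) ∧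
    (∀ i j, i ≠ j → Disjoint (P i) (P j)) ∧
    (∀ v : α, v ≠ h → ∃ i, v ∈ P i) ∧
    E = Finset.image (fun i => insert h (P i)) Finset.univ

/-- The hypergraph is connected: any two distinct vertices are joined by a chain of
pairwise intersecting edges. -/
def IsConnectedH (E : Finset (Finset α)) : Prop :=
  ∀ i j : α, i ≠ j → Relation.TransGen (fun a b : α => ∃ e ∈ E, a ∈ e ∧ b ∈ e) i j

/-- For `k` even: the hypergraph is odd-bipartite. -/
def IsOddBipartite [Fintype α] (E : Finset (Finset α)) : Prop :=
  E = ∅ ∨ ∃ V₁ : Finset α, V₁ ≠ ∅ ∧ V₁ ≠ Finset.univ ∧ ∀ e ∈ E, Odd (e ∩ V₁).card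

/-- `G = (V, E)` is a `k`-uniform hypercycle of size `s`. -/
def IsHypercycle (k : ℕ) (s : ℕ) [NeZero s] (E : Finset (Finset α)) : Prop :=
  ∃ P : Fin s → Finset α,
    (∀ i, (P i).card = k) ∧
    (∀ v : α, ∃ i, v ∈ P i) ∧
    E = Finset.image P Finset.univ ∧
    (∀ i : Fin s, (P i ∩ P (i + 1)).card = 1) ∧
    (∀ i j : Fin s, i ≠ j → j ≠ i + 1 → i ≠ j + 1 → P i ∩ P j = ∅) ∧
    Function.Injective (fun i : Fin s => P i ∩ P (i + 1))

section Laplacian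

variable {k : ℕ} {E : Finset (Finset α)}

theorem lapAct_single_of_three_le_card (hk : 2 ≤ k) (hE : ∀ e ∈ E, 3 ≤ #e) (h i : α) :
    lapAct k E (Pi.single h 1) i = hdeg E h * (Pi.single h 1 : α → ℝ) i ^ (k - 1) := by
  have hprod : ∀ e ∈ E.filter (i ∈ ·), ∏ j ∈ e.erase i, (Pi.single h 1 : α → ℝ) j = 0 := by
    intro e he
    obtain ⟨he, hie⟩ := mem_filter.1 he
    have : 1 < #(e.erase i) := by rw [card_erase_of_mem hie]; have := hE e he; omega
    obtain ⟨j, hj, hjh⟩ := exists_mem_ne this h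
    exact prod_eq_zero hj (Pi.single_eq_of_ne hjh _)
  rw [lapAct, sum_eq_zero hprod, sub_zero]
  rcases eq_or_ne i h with rfl | hih
  · rfl
  · simp [Pi.single_eq_of_ne hih, zero_pow (by omega : k - 1 ≠ 0)]

theorem isLapEig_hdeg_of_three_le_card (hk : 2 ≤ k) (hE : ∀ e ∈ E, 3 ≤ #e) (h : α) :
    IsLapEig k E (hdeg E h) :=
  ⟨Pi.single h 1, fun h0 => by simpa using congrFun h0 h, lapAct_single_of_three_le_card hk hE h⟩

variable {z : α → ℝ} {lam : ℝ} {u : α} {e : Finset α}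

theorem lapAct_of_filter_eq_singleton (hu : E.filter (u ∈ ·) = {e}) :
    lapAct k E z u = z u ^ (k - 1) - ∏ j ∈ e.erase u, z j := by
  simp [lapAct, hdeg, hu]

theorem one_sub_mul_pow_eq_prod_of_filter_eq_singleton (hk : k ≠ 0)
    (heig : lapAct k E z u = lam * z u ^ (k - 1)) (hu : E.filter (u ∈ ·) = {e}) (hue : u ∈ e) :
    (1 - lam) * z u ^ k = ∏ j ∈ e, z j := by
  rw [lapAct_of_filter_eq_singleton hu] at heig
  rw [← mul_prod_erase e z hue, ← pow_sub_one_mul hk]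
  linear_combination z u * heig

variable (heig : ∀ i, lapAct k E z i = lam * z i ^ (k - 1))
include heig

theorem eigvec_eq_of_filter_eq_singleton (hk : Odd k) (hlam : lam ≠ 1) {v : α}
    (hu : E.filter (u ∈ ·) = {e}) (hv : E.filter (v ∈ ·) = {e}) (hue : u ∈ e) (hve : v ∈ e) :
    z u = z v := by
  have := (one_sub_mul_pow_eq_prod_of_filter_eq_singleton hk.pos.ne' (heig u) hu hue).trans
    (one_sub_mul_pow_eq_prod_of_filter_eq_singleton hk.pos.ne' (heig v) hv hve).symm
  exact hk.strictMono_pow.injective (mul_left_cancel₀ (sub_ne_zero.2 hlam.symm) this)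

theorem eigvec_eq_one_sub_mul_of_pendant_edge (hk : Odd k) (hlam : lam ≠ 1) {h : α}
    {s : Finset α} (hhs : h ∉ s) (hs : #s = k - 1)
    (hpend : ∀ v ∈ s, E.filter (v ∈ ·) = {insert h s})
    (hu : u ∈ s) (hzu : z u ≠ 0) :
    z h = (1 - lam) * z u := by
  have hconst : ∏ j ∈ s, z j = z u ^ (k - 1) := by
    rw [prod_congr rfl fun v hv => eigvec_eq_of_filter_eq_singleton heig hk hlam (hpend v hv)
      (hpend u hu) (mem_insert_of_mem hv) (mem_insert_of_mem hu), prod_const, hs]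
  have := one_sub_mul_pow_eq_prod_of_filter_eq_singleton hk.pos.ne' (heig u) (hpend u hu)
    (mem_insert_of_mem hu)
  rw [prod_insert hhs, hconst, ← pow_sub_one_mul hk.pos.ne'] at this
  exact mul_left_cancel₀ (pow_ne_zero (k - 1) hzu) (by linear_combination -this)

end Laplacian

section Hyperstar

open Function

variable {ι : Type*} [Fintype ι] {h : α} {P : ι → Finset α}

def hyperstarEdges (h : α) (P : ι → Finset α) : Finset (Finset α) :=
  univ.image fun i => insert h (P i)

variable (hhP : ∀ i, h ∉ P i) (hdisj : Pairwise (Disjoint on P))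
include hhP hdisj

theorem filter_mem_hyperstarEdges_of_mem {v : α} {i : ι} (hv : v ∈ P i) :
    (hyperstarEdges h P).filter (v ∈ ·) = {insert h (P i)} := by
  ext e
  simp only [hyperstarEdges, mem_filter, mem_image, mem_univ, true_and, mem_singleton]
  constructor
  · rintro ⟨⟨j, rfl⟩, hve⟩
    have hvj : v ∈ P j := (mem_insert.1 hve).resolve_left (ne_of_mem_of_not_mem hv (hhP i))
    rw [hdisj.eq (not_disjoint_iff.2 ⟨v, hvj, hv⟩)]
  · rintro rfl
    exact ⟨⟨i, rfl⟩, mem_insert_of_mem hv⟩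

theorem hdeg_hyperstarEdges_heart (hne : ∀ i, (P i).Nonempty) :
    hdeg (hyperstarEdges h P) h = Fintype.card ι := by
  have hinj : Function.Injective fun i => insert h (P i) := by
    intro i j (hij : insert h (P i) = insert h (P j))
    obtain ⟨v, hv⟩ := hne i
    have hvj : v ∈ P j := (mem_insert.1 (hij ▸ mem_insert_of_mem hv)).resolve_left
      (ne_of_mem_of_not_mem hv (hhP i))
    exact hdisj.eq (not_disjoint_iff.2 ⟨v, hv, hvj⟩)
  rw [hdeg, filter_true_of_mem fun e he => ?_, hyperstarEdges, card_image_of_injective _ hinj,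
    card_univ]
  obtain ⟨i, -, rfl⟩ := mem_image.1 he
  exact mem_insert_self _ _

theorem isLapEig_card_hyperstarEdges {k : ℕ} (hk : 3 ≤ k) (hP : ∀ i, #(P i) = k - 1) :
    IsLapEig k (hyperstarEdges h P) (Fintype.card ι) := by
  have hne : ∀ i, (P i).Nonempty := fun i => card_pos.1 (by rw [hP i]; omega)
  rw [← hdeg_hyperstarEdges_heart hhP hdisj hne]
  refine isLapEig_hdeg_of_three_le_card (by omega) (fun e he => ?_) h
  obtain ⟨i, -, rfl⟩ := mem_image.1 he
  rw [card_insert_of_notMem (hhP i), hP i]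
  omega

end Hyperstar

theorem hyperstar_odd_eigvec_structure_general {n k d : ℕ} (hk : 3 ≤ k)
    (hkodd : Odd k) (hd : 1 < d) (h : Fin n) (P : Fin d → Finset (Fin n))
    (hhP : ∀ i, h ∉ P i) (hPcard : ∀ i, (P i).card = k - 1)
    (hPdisj : ∀ i j, i ≠ j → Disjoint (P i) (P j))
    (hPcover : ∀ v : Fin n, v ≠ h → ∃ i, v ∈ P i)
    (E : Finset (Finset (Fin n)))
    (hE : E = Finset.image (fun i => insert h (P i)) Finset.univ)
    (lam : ℝ) (hlam : IsLargestLapEig k E lam)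
    (z : Fin n → ℝ)
    (heig : ∀ i, lapAct k E z i = lam * z i ^ (k - 1)) :
    (∃ c : ℝ, ∀ i, i ≠ h → z i ≠ 0 → z i = c) ∧
    (∀ i, i ≠ h → z i ≠ 0 → z h * z i < 0) := by
  subst hE
  have hdisj : Pairwise (Function.onFun Disjoint P) := fun i j => hPdisj i j
  have hdlam : (d : ℝ) ≤ lam := by
    simpa using hlam.2 _ (isLapEig_card_hyperstarEdges hhP hdisj hk hPcard)
  have hlam1 : 1 < lam := lt_of_lt_of_le (by exact_mod_cast hd) hdlam
  have heart : ∀ v, v ≠ h → z v ≠ 0 → z h = (1 - lam) * z v := by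
    intro v hvh hzv
    obtain ⟨i, hvi⟩ := hPcover v hvh
    exact eigvec_eq_one_sub_mul_of_pendant_edge heig hkodd hlam1.ne' (hhP i) (hPcard i)
      (fun u hu => filter_mem_hyperstarEdges_of_mem hhP hdisj hu) hvi hzv
  refine ⟨⟨z h / (1 - lam), fun v hvh hzv => ?_⟩, fun v hvh hzv => ?_⟩
  · rw [heart v hvh hzv, mul_div_cancel_left₀ _ (sub_ne_zero.2 hlam1.ne)]
  · rw [heart v hvh hzv, mul_assoc]
    exact mul_neg_of_neg_of_pos (sub_neg.2 hlam1) (mul_self_pos.2 hzv)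

/-- For `k` odd and a `k`-uniform hyperstar of size `d > 1` with heart
`h` and Laplacian tensor `L`: if `z` is an H-eigenvector of `L` corresponding to
`λ(L)`, then `z i` is a constant for all `i` in the support of `z` other than the
heart; moreover, whenever the support of `z` contains a vertex other than the heart,
the sign of `z` at the heart is opposite to its sign at the non-heart vertices of the
support. -/
theorem hyperstar_odd_eigvec_structure {n k d : ℕ} (hk : 3 ≤ k) (hkn : k ≤ n)
    (hkodd : Odd k) (hd : 1 < d) (h : Fin n) (P : Fin d → Finset (Fin n))
    (hhP : ∀ i, h ∉ P i) (hPcard : ∀ i, (P i).card = k - 1)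
    (hPdisj : ∀ i j, i ≠ j → Disjoint (P i) (P j))
    (hPcover : ∀ v : Fin n, v ≠ h → ∃ i, v ∈ P i)
    (E : Finset (Finset (Fin n)))
    (hE : E = Finset.image (fun i => insert h (P i)) Finset.univ)
    (lam : ℝ) (hlam : IsLargestLapEig k E lam)
    (z : Fin n → ℝ) (hz : z ≠ 0)
    (heig : ∀ i, lapAct k E z i = lam * z i ^ (k - 1)) :
    (∃ c : ℝ, ∀ i, i ≠ h → z i ≠ 0 → z i = c) ∧
    (∀ i, i ≠ h → z i ≠ 0 → z h * z i < 0) :=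
  hyperstar_odd_eigvec_structure_general hk hkodd hd h P hhP hPcard hPdisj hPcover E hE lam hlam z
    heig
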